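/- Let σ(t) = 1/(1 + exp(−t)), let N > 0, γ > 0, δ > 0, T > 0, and let x : [0,T] → ℝ be differentiable with x(0) = 0 and x′(t) = exp(−Nδt/T)·(σ(γNt/T) − x(t)) for all t ∈ [0,T]. Define β(s) = (−1/(Nδ))·log(exp(−Nδ) − (Nδ/T)·log s) for s ∈ (0,1]. Then the function τ ↦ exp(−Nγ·β(τ)) is integrable on (0,1) and σ(Nγ) − x(T) < ∫₀¹ exp(−Nγ·β(τ)) dτ. -/

import Mathlib

/-!
Write `φ = naturalCoord (Nδ) T`. The relaxation rate `exp (-Nδ t / T)` is the logarithmic derivative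
of `φ`, so `φ` is an integrating factor: `x T = ∫₀ᵀ φ' t σ(γ N t / T) dt`, and `∫₀ᵀ φ' = 1 - φ 0`.
Since `σ(Nγ) - σ(u) ≤ exp (-u)` and `σ(Nγ) < 1`, this gives
`σ(Nγ) - x T < φ 0 + ∫₀ᵀ φ' t exp (-Nγ t / T) dt`.
On the other side `β (φ t) = t / T`, so the substitution `s = φ t` turns
`∫_{φ 0}^1 exp (-Nγ β)` into that last integral, while `β ≤ 0` on `(0, φ 0]` makes
`∫_0^{φ 0} exp (-Nγ β) ≥ φ 0`.
Integrability holds because `exp (-Nγ β s) = (exp (-Nδ) - Nδ / T * log s) ^ (γ / δ)` grows only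
like a power of `-log s` as `s → 0`.
-/

open MeasureTheory

/-- The logistic sigmoid function σ(t) = 1/(1 + exp(−t)). -/
noncomputable def logistic (t : ℝ) : ℝ := 1 / (1 + Real.exp (-t))

open Real Set

theorem logistic_lt_one (t : ℝ) : logistic t < 1 := by
  rw [logistic, div_lt_one (by positivity)]
  linarith [exp_pos (-t)]

theorem one_sub_logistic_le_exp_neg (t : ℝ) : 1 - logistic t ≤ exp (-t) := by
  have h : 1 - logistic t = exp (-t) / (1 + exp (-t)) := by
    rw [logistic]
    field_simp
    ring
  rw [h]
  exact div_le_self (exp_pos _).le (by linarith [exp_pos (-t)])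

@[fun_prop]
theorem continuous_logistic : Continuous logistic := by
  unfold logistic
  exact continuous_const.div (by fun_prop) fun t => by positivity

theorem integrableOn_rpow_sub_mul_log {a b p : ℝ} (ha : 0 < a) (hb : 0 ≤ b) (hp : 0 ≤ p) :
    IntegrableOn (fun s => (a - b * log s) ^ p) (Ioc 0 1) := by
  set ε := 1 / (p * b + 1)
  have hε : 0 < ε := by positivity
  have hr : -1 < -(p * ε * b) := by
    have : p * ε * b = p * b / (p * b + 1) := by ring
    rw [this, neg_lt_neg_iff, div_lt_one (by positivity)]
    linarith
  have hmajor : IntegrableOn (fun s => exp (p * (ε * a - 1 - log ε)) * s ^ (-(p * ε * b)))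
      (Ioc 0 1) := ((intervalIntegral.intervalIntegrable_rpow' hr).1).const_mul _
  refine hmajor.mono' (by fun_prop) (ae_restrict_of_forall_mem measurableSet_Ioc fun s hs => ?_)
  have hy : 0 < a - b * log s := by
    nlinarith [mul_nonpos_of_nonneg_of_nonpos hb (log_nonpos hs.1.le hs.2)]
  -- `log (ε y) ≤ ε y - 1`, with `ε` small enough that the resulting power of `s` is integrable
  have hlog := log_le_sub_one_of_pos (mul_pos hε hy)
  rw [log_mul hε.ne' hy.ne'] at hlog
  rw [norm_of_nonneg (rpow_nonneg hy.le _), rpow_def_of_pos hy, rpow_def_of_pos hs.1, ← exp_add,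
    exp_le_exp]
  nlinarith

/- With `m = Nδ`, `naturalSchedule m T` is the paper's `β`, and `naturalCoord m T t` is the natural
coordinate reached at annealing time `t`; its logarithmic derivative `exp (-(m * t / T))` is the
relaxation rate of the dynamics. -/
noncomputable def naturalSchedule (m T s : ℝ) : ℝ := -1 / m * log (exp (-m) - m / T * log s)

noncomputable def naturalCoord (m T t : ℝ) : ℝ := exp (T / m * (exp (-m) - exp (-(m * t / T))))

theorem mul_sub_mul_eq_integral_of_linear_ode {x φ a b : ℝ → ℝ} {t₀ t₁ : ℝ} (h : t₀ ≤ t₁)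
    (hx : ∀ t ∈ Icc t₀ t₁, HasDerivAt x (a t * (b t - x t)) t)
    (hφ : ∀ t ∈ Icc t₀ t₁, HasDerivAt φ (a t * φ t) t)
    (hint : IntervalIntegrable (fun t => a t * φ t * b t) volume t₀ t₁) :
    φ t₁ * x t₁ - φ t₀ * x t₀ = ∫ t in t₀..t₁, a t * φ t * b t := by
  refine (intervalIntegral.integral_eq_sub_of_hasDerivAt (f := fun t => φ t * x t)
    (fun t ht => ?_) hint).symm
  rw [uIcc_of_le h] at ht
  exact ((hφ t ht).mul (hx t ht)).congr_deriv (by ring)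

section NaturalCoordinates

variable {m T : ℝ}

theorem naturalCoord_pos (t : ℝ) : 0 < naturalCoord m T t := exp_pos _

@[fun_prop]
theorem continuous_naturalCoord : Continuous (naturalCoord m T) := by
  unfold naturalCoord
  fun_prop

theorem hasDerivAt_naturalCoord (hm : m ≠ 0) (hT : T ≠ 0) (t : ℝ) :
    HasDerivAt (naturalCoord m T) (exp (-(m * t / T)) * naturalCoord m T t) t := by
  have h : HasDerivAt (fun t => -(m * t / T)) (-(m / T)) t := by
    simpa using ((hasDerivAt_id' t).const_mul m |>.div_const T).fun_neg
  refine ((h.exp.const_sub (exp (-m))).const_mul (T / m)).exp.congr_deriv ?_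
  rw [naturalCoord]
  field_simp

theorem naturalCoord_self (hT : T ≠ 0) : naturalCoord m T T = 1 := by
  simp [naturalCoord, mul_div_cancel_right₀ m hT]

theorem naturalCoord_le_one (hm : 0 < m) (hT : 0 < T) {t : ℝ} (ht : t ≤ T) :
    naturalCoord m T t ≤ 1 := by
  have : m * t / T ≤ m := by
    rw [div_le_iff₀ hT]
    exact mul_le_mul_of_nonneg_left ht hm.le
  rw [naturalCoord, exp_le_one_iff]
  exact mul_nonpos_of_nonneg_of_nonpos (by positivity) (sub_nonpos.2 (exp_le_exp.2 (by linarith)))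

theorem naturalSchedule_naturalCoord (hm : m ≠ 0) (hT : T ≠ 0) (t : ℝ) :
    naturalSchedule m T (naturalCoord m T t) = t / T := by
  rw [naturalSchedule, naturalCoord, log_exp]
  field_simp
  rw [sub_sub_cancel, log_exp]
  field_simp

theorem naturalSchedule_nonpos (hm : 0 < m) (hT : 0 < T) {s : ℝ} (hs : 0 < s)
    (hs₀ : s ≤ naturalCoord m T 0) : naturalSchedule m T s ≤ 0 := by
  have hlog : log s ≤ T / m * (exp (-m) - 1) := by
    simpa [naturalCoord] using log_le_log hs hs₀
  have : 1 ≤ exp (-m) - m / T * log s := by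
    have h := mul_le_mul_of_nonneg_left hlog (div_pos hm hT).le
    have e : m / T * (T / m * (exp (-m) - 1)) = exp (-m) - 1 := by field_simp
    linarith
  exact mul_nonpos_of_nonpos_of_nonneg (by rw [neg_div]; exact neg_nonpos.2 (by positivity))
    (log_nonneg this)

theorem exp_neg_mul_naturalSchedule (hm : 0 < m) (hT : 0 < T) (k : ℝ) {s : ℝ}
    (hs : s ∈ Ioc 0 1) :
    exp (-(k * naturalSchedule m T s)) = (exp (-m) - m / T * log s) ^ (k / m) := by
  have : 0 < exp (-m) - m / T * log s := by
    nlinarith [exp_pos (-m), mul_nonpos_of_nonneg_of_nonpos (div_pos hm hT).le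
      (log_nonpos hs.1.le hs.2)]
  rw [rpow_def_of_pos this, naturalSchedule]
  congr 1
  field_simp

theorem integrableOn_exp_neg_mul_naturalSchedule (hm : 0 < m) (hT : 0 < T) {k : ℝ}
    (hk : 0 ≤ k) :
    IntegrableOn (fun s => exp (-(k * naturalSchedule m T s))) (Ioc 0 1) :=
  (integrableOn_rpow_sub_mul_log (exp_pos _) (div_pos hm hT).le (div_nonneg hk hm.le)).congr_fun
    (fun _ hs => (exp_neg_mul_naturalSchedule hm hT k hs).symm) measurableSet_Ioc

theorem integral_deriv_naturalCoord (hm : m ≠ 0) (hT : T ≠ 0) :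
    ∫ t in 0..T, exp (-(m * t / T)) * naturalCoord m T t = 1 - naturalCoord m T 0 := by
  rw [intervalIntegral.integral_eq_sub_of_hasDerivAt (fun t _ => hasDerivAt_naturalCoord hm hT t)
    (Continuous.intervalIntegrable (by fun_prop) _ _), naturalCoord_self hT]

theorem eq_integral_naturalCoord_of_hasDerivAt (hm : m ≠ 0) (hT : 0 < T) {x b : ℝ → ℝ}
    (hb : Continuous b) (hx0 : x 0 = 0)
    (hx : ∀ t ∈ Icc 0 T, HasDerivAt x (exp (-(m * t / T)) * (b t - x t)) t) :
    x T = ∫ t in 0..T, exp (-(m * t / T)) * naturalCoord m T t * b t := by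
  have h := mul_sub_mul_eq_integral_of_linear_ode hT.le hx
    (fun t _ => hasDerivAt_naturalCoord hm hT.ne' t)
    (Continuous.intervalIntegrable (by fun_prop) _ _)
  rwa [naturalCoord_self hT.ne', hx0, one_mul, mul_zero, sub_zero] at h

theorem add_integral_le_integral_naturalSchedule (hm : 0 < m) (hT : 0 < T) {k : ℝ} (hk : 0 ≤ k) :
    naturalCoord m T 0 +
        ∫ t in 0..T, exp (-(m * t / T)) * naturalCoord m T t * exp (-(k * t / T)) ≤
      ∫ s in Ioo 0 1, exp (-(k * naturalSchedule m T s)) := by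
  set G := fun s => exp (-(k * naturalSchedule m T s))
  set s₀ := naturalCoord m T 0
  have hG := integrableOn_exp_neg_mul_naturalSchedule hm hT hk
  have hs₀ : 0 < s₀ := naturalCoord_pos 0
  have hs₀_le : s₀ ≤ 1 := naturalCoord_le_one hm hT hT.le
  have hG₁ : IntervalIntegrable G volume 0 s₀ :=
    (intervalIntegrable_iff_integrableOn_Ioc_of_le hs₀.le).2
      (hG.mono_set (Ioc_subset_Ioc_right hs₀_le))
  have hG₂ : IntervalIntegrable G volume s₀ 1 :=
    (intervalIntegrable_iff_integrableOn_Ioc_of_le hs₀_le).2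
      (hG.mono_set (Ioc_subset_Ioc_left hs₀.le))
  have hlower : s₀ ≤ ∫ s in 0..s₀, G s := by
    rw [intervalIntegral.integral_of_le hs₀.le]
    have h := setIntegral_mono_on (integrableOn_const (by simp)) hG₁.1 measurableSet_Ioc
      fun s hs => one_le_exp (neg_nonneg.2
        (mul_nonpos_of_nonneg_of_nonpos hk (naturalSchedule_nonpos hm hT hs.1 hs.2)))
    simpa [hs₀.le] using h
  have hsubst : ∫ s in s₀..1, G s =
      ∫ t in 0..T, exp (-(m * t / T)) * naturalCoord m T t * exp (-(k * t / T)) := by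
    have h := intervalIntegral.integral_deriv_smul_comp_of_deriv_nonneg (a := 0) (b := T) (g := G)
      continuous_naturalCoord.continuousOn (fun t _ => hasDerivAt_naturalCoord hm.ne' hT.ne' t)
      fun t _ => (mul_pos (exp_pos _) (naturalCoord_pos t)).le
    rw [naturalCoord_self hT.ne'] at h
    rw [← h]
    refine intervalIntegral.integral_congr fun t _ => ?_
    simp only [G, Function.comp, smul_eq_mul, naturalSchedule_naturalCoord hm.ne' hT.ne',
      mul_div_assoc]
  rw [← integral_Ioc_eq_integral_Ioo, ← intervalIntegral.integral_of_le zero_le_one,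
    ← intervalIntegral.integral_add_adjacent_intervals hG₁ hG₂, hsubst]
  linarith

end NaturalCoordinates

theorem logistic_sub_integral_lt {w : ℝ → ℝ} {k T τ₀ : ℝ} (hT : 0 ≤ T) (hτ₀ : 0 < τ₀)
    (hw : Continuous w) (hw0 : ∀ t ∈ Icc 0 T, 0 ≤ w t) (hw1 : ∫ t in 0..T, w t = 1 - τ₀) :
    logistic k - ∫ t in 0..T, w t * logistic (k * t / T) <
      τ₀ + ∫ t in 0..T, w t * exp (-(k * t / T)) := by
  have hmono : ∫ t in 0..T, w t * (logistic k - logistic (k * t / T)) ≤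
      ∫ t in 0..T, w t * exp (-(k * t / T)) :=
    intervalIntegral.integral_mono_on hT (Continuous.intervalIntegrable (by fun_prop) _ _)
      (Continuous.intervalIntegrable (by fun_prop) _ _) fun t ht =>
        mul_le_mul_of_nonneg_left
          (by linarith [logistic_lt_one k, one_sub_logistic_le_exp_neg (k * t / T)]) (hw0 t ht)
  have hsplit : ∫ t in 0..T, w t * (logistic k - logistic (k * t / T)) =
      logistic k * (1 - τ₀) - ∫ t in 0..T, w t * logistic (k * t / T) := by
    simp_rw [mul_sub]
    rw [intervalIntegral.integral_sub (Continuous.intervalIntegrable (by fun_prop) _ _)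
      (Continuous.intervalIntegrable (by fun_prop) _ _), intervalIntegral.integral_mul_const, hw1]
    ring
  nlinarith [logistic_lt_one k]

/-- Equation (2) of the paper: for the annealed dynamics
x′(t) = exp(−Nδt/T)·(σ(γNt/T) − x(t)) with x(0) = 0, the function
τ ↦ exp(−Nγ·β(τ)) is integrable on (0,1) and the total variational distance
satisfies σ(Nγ) − x(T) < ∫₀¹ exp(−Nγ·β(τ)) dτ. -/
theorem stmt_10 (N γ δ T : ℝ) (hN : 0 < N) (hγ : 0 < γ) (hδ : 0 < δ) (hT : 0 < T)
    (x : ℝ → ℝ)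
    (hx0 : x 0 = 0)
    (hode : ∀ t ∈ Set.Icc (0:ℝ) T, HasDerivAt x
      (Real.exp (-(N * δ * t / T)) * (logistic (γ * N * t / T) - x t)) t)
    (β : ℝ → ℝ)
    (hβ : ∀ s ∈ Set.Ioc (0:ℝ) 1, β s =
      (-1 / (N * δ)) * Real.log (Real.exp (-(N * δ)) - (N * δ / T) * Real.log s)) :
    IntegrableOn (fun τ => Real.exp (-(N * γ * β τ))) (Set.Ioo (0:ℝ) 1) ∧
    logistic (N * γ) - x T <
      ∫ τ in Set.Ioo (0:ℝ) 1, Real.exp (-(N * γ * β τ)) := by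
  have hm : 0 < N * δ := mul_pos hN hδ
  have hk : 0 ≤ N * γ := (mul_pos hN hγ).le
  have hβ_eq : EqOn (fun τ => exp (-(N * γ * naturalSchedule (N * δ) T τ)))
      (fun τ => exp (-(N * γ * β τ))) (Ioo 0 1) := fun s hs => by
    simp only [hβ s (Ioo_subset_Ioc_self hs), naturalSchedule]
  have hode' : ∀ t ∈ Icc 0 T, HasDerivAt x
      (exp (-(N * δ * t / T)) * (logistic (N * γ * t / T) - x t)) t := by
    simpa only [mul_comm γ N] using hode
  refine ⟨((integrableOn_exp_neg_mul_naturalSchedule hm hT hk).mono_set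
    Ioo_subset_Ioc_self).congr_fun hβ_eq measurableSet_Ioo, ?_⟩
  rw [← setIntegral_congr_fun measurableSet_Ioo hβ_eq,
    eq_integral_naturalCoord_of_hasDerivAt hm.ne' hT (by fun_prop) hx0 hode']
  refine (logistic_sub_integral_lt hT.le (naturalCoord_pos 0) (by fun_prop)
    (fun t _ => (mul_pos (exp_pos _) (naturalCoord_pos t)).le)
    (integral_deriv_naturalCoord hm.ne' hT.ne')).trans_le ?_
  exact add_integral_le_integral_naturalSchedule hm hT hk
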